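/- arXiv:2208.02412 — 6 statements merged into one kernel-verified Lean document; each statement's English description precedes it below -/
import Mathlib

section
/- Let (Ω, ℱ, P) be a probability space with an integrable real random variable G (the counterfactual gain G₁(0) := Y₁(0) − Y₀(0)) and binary random variables D, D* : Ω → {0,1}. Suppose P(D=d, D*=d') > 0 for all d, d' ∈ {0,1}, and suppose non-differential misclassification in counterfactual trends holds: E[G | D=d, D*=d'] = E[G | D*=d'] for all d, d' ∈ {0,1}. Then DT(D) = DT(D*) · (P(D*=1 | D=1) + P(D*=0 | D=0) − 1), where DT(D) := E[G | D=1] − E[G | D=0] and DT(D*) := E[G | D*=1] − E[G | D*=0]. -/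
open MeasureTheory ProbabilityTheory

/-- Conditional expectation of `Y` given the event `A`: `E[Y · 1_A] / P(A)`. -/
noncomputable def cexp {Ω : Type*} [MeasureSpace Ω] (Y : Ω → ℝ) (A : Set Ω) : ℝ :=
  (∫ ω in A, Y ω) / ((ℙ : Measure Ω) A).toReal

/-- Conditional probability of the event `A` given the event `B`: `P(A ∩ B) / P(B)`. -/
noncomputable def cprob {Ω : Type*} [MeasureSpace Ω] (A B : Set Ω) : ℝ :=
  ((ℙ : Measure Ω) (A ∩ B)).toReal / ((ℙ : Measure Ω) B).toReal

/-- **Second claim of Proposition 1 (two-period panel case).** Under non-differential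
misclassification in counterfactual trends,
`DT(D) = DT(D*) · (P(D* = 1 | D = 1) + P(D* = 0 | D = 0) − 1)`. -/
theorem trend_relation_under_nondifferential_misclassification
    {Ω : Type*} [MeasureSpace Ω] [IsProbabilityMeasure (ℙ : Measure Ω)]
    (G : Ω → ℝ) (D Dstar : Ω → ℝ)
    (hG : Integrable G)
    (hDmeas : Measurable D) (hDsmeas : Measurable Dstar)
    (hDbin : ∀ ω, D ω = 0 ∨ D ω = 1) (hDsbin : ∀ ω, Dstar ω = 0 ∨ Dstar ω = 1)
    (hpos : ∀ d d' : ℝ, (d = 0 ∨ d = 1) → (d' = 0 ∨ d' = 1) →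
      0 < (ℙ : Measure Ω) ({ω | D ω = d} ∩ {ω | Dstar ω = d'}))
    (hnondiff : ∀ d d' : ℝ, (d = 0 ∨ d = 1) → (d' = 0 ∨ d' = 1) →
      cexp G ({ω | D ω = d} ∩ {ω | Dstar ω = d'}) = cexp G {ω | Dstar ω = d'}) :
    cexp G {ω | D ω = 1} - cexp G {ω | D ω = 0}
      = (cexp G {ω | Dstar ω = 1} - cexp G {ω | Dstar ω = 0})
        * (cprob {ω | Dstar ω = 1} {ω | D ω = 1}
            + cprob {ω | Dstar ω = 0} {ω | D ω = 0} - 1) := by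
  have hmeasInter : ∀ d d' : ℝ, MeasurableSet ({ω | D ω = d} ∩ {ω | Dstar ω = d'}) :=
    fun d d' => (hDmeas (measurableSet_singleton d)).inter (hDsmeas (measurableSet_singleton d'))
  have hpfin : ∀ d d' : ℝ, (ℙ : Measure Ω) ({ω | D ω = d} ∩ {ω | Dstar ω = d'}) ≠ ⊤ :=
    fun d d' => measure_ne_top _ _
  have hppos : ∀ d d' : ℝ, (d = 0 ∨ d = 1) → (d' = 0 ∨ d' = 1) →
      0 < ((ℙ : Measure Ω) ({ω | D ω = d} ∩ {ω | Dstar ω = d'})).toReal :=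
    fun d d' h h' => ENNReal.toReal_pos (hpos d d' h h').ne' (hpfin d d')
  have hsplit : ∀ d : ℝ, {ω | D ω = d} =
      ({ω | D ω = d} ∩ {ω | Dstar ω = 0}) ∪ ({ω | D ω = d} ∩ {ω | Dstar ω = 1}) := by
    intro d; ext ω
    simp only [Set.mem_union, Set.mem_inter_iff, Set.mem_setOf_eq]
    rcases hDsbin ω with h | h <;> tauto
  have hdisj : ∀ d : ℝ, Disjoint ({ω | D ω = d} ∩ {ω | Dstar ω = 0})
      ({ω | D ω = d} ∩ {ω | Dstar ω = 1}) := by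
    intro d
    refine Set.disjoint_left.2 ?_
    rintro ω ⟨_, h0⟩ ⟨_, h1⟩
    simp only [Set.mem_setOf_eq] at h0 h1
    rw [h0] at h1; norm_num at h1
  have hPD : ∀ d : ℝ, ((ℙ : Measure Ω) {ω | D ω = d}).toReal =
      ((ℙ : Measure Ω) ({ω | D ω = d} ∩ {ω | Dstar ω = 0})).toReal +
      ((ℙ : Measure Ω) ({ω | D ω = d} ∩ {ω | Dstar ω = 1})).toReal := by
    intro d
    conv_lhs => rw [hsplit d]
    rw [measure_union (hdisj d) (hmeasInter d 1),
      ENNReal.toReal_add (hpfin d 0) (hpfin d 1)]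
  have hIntEq : ∀ d d' : ℝ, (d = 0 ∨ d = 1) → (d' = 0 ∨ d' = 1) →
      (∫ ω in {ω | D ω = d} ∩ {ω | Dstar ω = d'}, G ω) =
      cexp G {ω | Dstar ω = d'} *
        ((ℙ : Measure Ω) ({ω | D ω = d} ∩ {ω | Dstar ω = d'})).toReal := by
    intro d d' h h'
    rw [← hnondiff d d' h h']
    unfold cexp
    exact (div_mul_cancel₀ _ (hppos d d' h h').ne').symm
  have hInt : ∀ d : ℝ, (d = 0 ∨ d = 1) → (∫ ω in {ω | D ω = d}, G ω) =
      cexp G {ω | Dstar ω = 0} *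
        ((ℙ : Measure Ω) ({ω | D ω = d} ∩ {ω | Dstar ω = 0})).toReal +
      cexp G {ω | Dstar ω = 1} *
        ((ℙ : Measure Ω) ({ω | D ω = d} ∩ {ω | Dstar ω = 1})).toReal := by
    intro d h
    conv_lhs => rw [hsplit d]
    rw [setIntegral_union (hdisj d) (hmeasInter d 1) hG.integrableOn hG.integrableOn,
      hIntEq d 0 h (Or.inl rfl), hIntEq d 1 h (Or.inr rfl)]
  have hs1 : (0:ℝ) < ((ℙ : Measure Ω) ({ω | D ω = 1} ∩ {ω | Dstar ω = 0})).toReal +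
      ((ℙ : Measure Ω) ({ω | D ω = 1} ∩ {ω | Dstar ω = 1})).toReal :=
    add_pos (hppos 1 0 (Or.inr rfl) (Or.inl rfl)) (hppos 1 1 (Or.inr rfl) (Or.inr rfl))
  have hs0 : (0:ℝ) < ((ℙ : Measure Ω) ({ω | D ω = 0} ∩ {ω | Dstar ω = 0})).toReal +
      ((ℙ : Measure Ω) ({ω | D ω = 0} ∩ {ω | Dstar ω = 1})).toReal :=
    add_pos (hppos 0 0 (Or.inl rfl) (Or.inl rfl)) (hppos 0 1 (Or.inl rfl) (Or.inr rfl))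
  have hcexpD : ∀ d : ℝ, (d = 0 ∨ d = 1) → cexp G {ω | D ω = d} =
      (cexp G {ω | Dstar ω = 0} * ((ℙ : Measure Ω) ({ω | D ω = d} ∩ {ω | Dstar ω = 0})).toReal +
       cexp G {ω | Dstar ω = 1} * ((ℙ : Measure Ω) ({ω | D ω = d} ∩ {ω | Dstar ω = 1})).toReal) /
      (((ℙ : Measure Ω) ({ω | D ω = d} ∩ {ω | Dstar ω = 0})).toReal +
       ((ℙ : Measure Ω) ({ω | D ω = d} ∩ {ω | Dstar ω = 1})).toReal) := by
    intro d h
    rw [show cexp G {ω | D ω = d} =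
        (∫ ω in {ω | D ω = d}, G ω) / ((ℙ : Measure Ω) {ω | D ω = d}).toReal from rfl,
      hInt d h, hPD d]
  rw [hcexpD 1 (Or.inr rfl), hcexpD 0 (Or.inl rfl)]
  unfold cprob
  rw [Set.inter_comm {ω | Dstar ω = 1} {ω | D ω = 1},
      Set.inter_comm {ω | Dstar ω = 0} {ω | D ω = 0}, hPD 1, hPD 0]
  field_simp
  ring
end

section
/- Let (Ω, ℱ, P) be a probability space with an integrable real random variable G and binary random variables D, D* : Ω → {0,1} such that P(D=d, D*=d') > 0 for all d, d' ∈ {0,1} and E[G | D=d, D*=d'] = E[G | D*=d'] for all d, d' ∈ {0,1}. If P(D*=1 | D=1) + P(D*=0 | D=0) ≠ 1, then DT(D) = 0 if and only if DT(D*) = 0, where DT(D) := E[G | D=1] − E[G | D=0] and DT(D*) := E[G | D*=1] − E[G | D*=0]. -/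
open MeasureTheory ProbabilityTheory

/-- Under non-differential misclassification in counterfactual trends, if the misclassification
probabilities do not sum to one, then parallel trends hold with `D` iff they hold with `D*`. -/
theorem parallel_trends_iff_under_nondifferential_misclassification
    {Ω : Type*} [MeasureSpace Ω] [IsProbabilityMeasure (ℙ : Measure Ω)]
    (G : Ω → ℝ) (D Dstar : Ω → ℝ)
    (hG : Integrable G)
    (hDmeas : Measurable D) (hDsmeas : Measurable Dstar)
    (hDbin : ∀ ω, D ω = 0 ∨ D ω = 1) (hDsbin : ∀ ω, Dstar ω = 0 ∨ Dstar ω = 1)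
    (hpos : ∀ d d' : ℝ, (d = 0 ∨ d = 1) → (d' = 0 ∨ d' = 1) →
      0 < (ℙ : Measure Ω) ({ω | D ω = d} ∩ {ω | Dstar ω = d'}))
    (hnondiff : ∀ d d' : ℝ, (d = 0 ∨ d = 1) → (d' = 0 ∨ d' = 1) →
      cexp G ({ω | D ω = d} ∩ {ω | Dstar ω = d'}) = cexp G {ω | Dstar ω = d'})
    (hsum : cprob {ω | Dstar ω = 1} {ω | D ω = 1}
        + cprob {ω | Dstar ω = 0} {ω | D ω = 0} ≠ 1) :
    cexp G {ω | D ω = 1} - cexp G {ω | D ω = 0} = 0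
      ↔ cexp G {ω | Dstar ω = 1} - cexp G {ω | Dstar ω = 0} = 0 := by
  classical
  set μ := (ℙ : Measure Ω) with hμ
  have hA : ∀ d : ℝ, MeasurableSet {ω | D ω = d} := fun d =>
    hDmeas (measurableSet_singleton d)
  have hB : ∀ d : ℝ, MeasurableSet {ω | Dstar ω = d} := fun d =>
    hDsmeas (measurableSet_singleton d)
  set q : ℝ → ℝ → ℝ := fun d d' => (μ ({ω | D ω = d} ∩ {ω | Dstar ω = d'})).toReal with hq
  have hqpos : ∀ d d', (d = 0 ∨ d = 1) → (d' = 0 ∨ d' = 1) → 0 < q d d' := by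
    intro d d' hd hd'
    exact ENNReal.toReal_pos (hpos d d' hd hd').ne' (measure_ne_top μ _)
  set e : ℝ → ℝ := fun d' => cexp G {ω | Dstar ω = d'} with he
  -- integral over each intersection
  have hint : ∀ d d', (d = 0 ∨ d = 1) → (d' = 0 ∨ d' = 1) →
      (∫ ω in {ω | D ω = d} ∩ {ω | Dstar ω = d'}, G ω) = q d d' * e d' := by
    intro d d' hd hd'
    have h := hnondiff d d' hd hd'
    rw [cexp] at h
    have hne : q d d' ≠ 0 := (hqpos d d' hd hd').ne'
    rw [div_eq_iff hne] at h
    rw [h]; ring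
  -- split over Dstar
  have hunion : ∀ d : ℝ, {ω | D ω = d} =
      ({ω | D ω = d} ∩ {ω | Dstar ω = 0}) ∪ ({ω | D ω = d} ∩ {ω | Dstar ω = 1}) := by
    intro d
    ext ω
    simp only [Set.mem_setOf_eq, Set.mem_union, Set.mem_inter_iff]
    constructor
    · intro h; rcases hDsbin ω with h' | h' <;> [left; right] <;> exact ⟨h, h'⟩
    · rintro (⟨h, _⟩ | ⟨h, _⟩) <;> exact h
  have hdisj : ∀ d : ℝ, Disjoint ({ω | D ω = d} ∩ {ω | Dstar ω = 0})
      ({ω | D ω = d} ∩ {ω | Dstar ω = 1}) := by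
    intro d
    apply Set.disjoint_left.mpr
    rintro ω ⟨_, h0⟩ ⟨_, h1⟩
    simp only [Set.mem_setOf_eq] at h0 h1
    rw [h0] at h1; norm_num at h1
  have hPsplit : ∀ d : ℝ, (μ {ω | D ω = d}).toReal = q d 0 + q d 1 := by
    intro d
    rw [hunion d, measure_union (hdisj d) ((hA d).inter (hB 1)),
      ENNReal.toReal_add (measure_ne_top μ _) (measure_ne_top μ _)]
  have hIsplit : ∀ d : ℝ, (d = 0 ∨ d = 1) →
      (∫ ω in {ω | D ω = d}, G ω) = q d 0 * e 0 + q d 1 * e 1 := by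
    intro d hd
    rw [hunion d, setIntegral_union (hdisj d) ((hA d).inter (hB 1))
      hG.integrableOn hG.integrableOn, hint d 0 hd (Or.inl rfl), hint d 1 hd (Or.inr rfl)]
  have hcexpD : ∀ d : ℝ, (d = 0 ∨ d = 1) →
      cexp G {ω | D ω = d} = (q d 0 * e 0 + q d 1 * e 1) / (q d 0 + q d 1) := by
    intro d hd
    rw [cexp, hIsplit d hd, ← hμ, hPsplit d]
  have hcprob : ∀ d d' : ℝ, (d = 0 ∨ d = 1) →
      cprob {ω | Dstar ω = d'} {ω | D ω = d} = q d d' / (q d 0 + q d 1) := by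
    intro d d' hd
    rw [cprob, Set.inter_comm, ← hμ, hPsplit d]
  rw [hcexpD 1 (Or.inr rfl), hcexpD 0 (Or.inl rfl)]
  rw [hcprob 1 1 (Or.inr rfl), hcprob 0 0 (Or.inl rfl)] at hsum
  set a := q 0 0 with ha
  set b := q 0 1 with hb
  set c := q 1 0 with hc
  set d := q 1 1 with hd
  have hapos : 0 < a := hqpos 0 0 (Or.inl rfl) (Or.inl rfl)
  have hbpos : 0 < b := hqpos 0 1 (Or.inl rfl) (Or.inr rfl)
  have hcpos : 0 < c := hqpos 1 0 (Or.inr rfl) (Or.inl rfl)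
  have hdpos : 0 < d := hqpos 1 1 (Or.inr rfl) (Or.inr rfl)
  have hab : a + b ≠ 0 := by positivity
  have hcd : c + d ≠ 0 := by positivity
  have hne : a * d - b * c ≠ 0 := by
    intro heq
    apply hsum
    field_simp
    nlinarith [heq]
  have key : (c * e 0 + d * e 1) / (c + d) - (a * e 0 + b * e 1) / (a + b)
      = ((a * d - b * c) / ((c + d) * (a + b))) * (e 1 - e 0) := by
    field_simp
    ring
  rw [key, mul_eq_zero]
  have hfac : (a * d - b * c) / ((c + d) * (a + b)) ≠ 0 :=
    div_ne_zero hne (by positivity)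
  constructor
  · rintro (h | h)
    · exact absurd h hfac
    · linarith
  · intro h; right; linarith
end

section
/- Let (Ω, ℱ, P) be a probability space, W an integrable real random variable (the untreated potential outcome), and T, D, D* : Ω → {0,1} binary random variables such that every event {D=d, D*=d', T=t} and every event {D*=d', T=t} (d, d', t ∈ {0,1}) has positive probability. Assume (i) P(D*=d' | D=d, T=t) = P(D*=d' | D=d) for all d, d', t ∈ {0,1}, and (ii) E[W | D=d, D*=d', T=1] − E[W | D=d, D*=d', T=0] = E[W | D*=d', T=1] − E[W | D*=d', T=0] for all d, d' ∈ {0,1}. Then (E[W | D=1, T=1] − E[W | D=1, T=0]) − (E[W | D=0, T=1] − E[W | D=0, T=0]) = (q₁ + q₀ − 1) · [(E[W | D*=1, T=1] − E[W | D*=1, T=0]) − (E[W | D*=0, T=1] − E[W | D*=0, T=0])], where q₁ := P(D*=1 | D=1) and q₀ := P(D*=0 | D=0). -/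
/-!
Split every cell `{D = d, T = t}` along `{D* = 1}` and its complement. By the law of total
expectation, `E[W | D = d, T = t]` is a mixture of the cell means `E[W | D = d, D* = d', T = t]`,
and assumption (i) makes the mixing weights `P(D* = d' | D = d)` independent of `t`. Hence the
trend within `{D = d}` is the same mixture of the cell trends, which (ii) replaces by the trends
`Δ_{d'}` within `{D* = d'}`. With `P(D* = 0 | D = 1) = 1 - q₁` and `P(D* = 1 | D = 0) = 1 - q₀`,
the difference of the two mixtures is `(q₁ + q₀ - 1) (Δ₁ - Δ₀)`.
-/

open MeasureTheory ProbabilityTheory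

section TotalExpectation

variable {Ω : Type*} [MeasureSpace Ω] [IsFiniteMeasure (ℙ : Measure Ω)]

/-- If `P(A ∩ B) = 0`, both sides vanish, so no positivity is needed. -/
lemma cprob_mul_cexp_inter (W : Ω → ℝ) (A B : Set Ω) :
    cprob B A * cexp W (A ∩ B) = (∫ ω in A ∩ B, W ω) / ((ℙ : Measure Ω) A).toReal := by
  rw [cprob, cexp, Set.inter_comm B A]
  by_cases hAB : ((ℙ : Measure Ω) (A ∩ B)).toReal = 0
  · have hnull : (ℙ : Measure Ω) (A ∩ B) = 0 := by
      rw [ENNReal.toReal_eq_zero_iff] at hAB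
      exact hAB.resolve_right (measure_ne_top _ _)
    rw [hAB, setIntegral_measure_zero _ hnull]
    simp
  · field_simp

lemma cexp_eq_cprob_mul_cexp_add {W : Ω → ℝ} {A B : Set Ω} (hB : MeasurableSet B)
    (hW : IntegrableOn W A) :
    cexp W A = cprob B A * cexp W (A ∩ B) + cprob Bᶜ A * cexp W (A ∩ Bᶜ) := by
  rw [cprob_mul_cexp_inter, cprob_mul_cexp_inter, ← add_div, ← Set.sdiff_eq,
    integral_inter_add_sdiff hB hW, cexp]

lemma cprob_add_cprob_compl {A B : Set Ω} (hB : MeasurableSet B)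
    (hA : (ℙ : Measure Ω) A ≠ 0) :
    cprob B A + cprob Bᶜ A = 1 := by
  have hA' : ((ℙ : Measure Ω) A).toReal ≠ 0 := ENNReal.toReal_ne_zero.mpr ⟨hA, measure_ne_top _ _⟩
  rw [cprob, cprob, ← add_div, div_eq_one_iff_eq hA', Set.inter_comm B, Set.inter_comm Bᶜ,
    ← Set.sdiff_eq, ← ENNReal.toReal_add (measure_ne_top _ _) (measure_ne_top _ _),
    measure_inter_add_sdiff A hB]

lemma cexp_inter_eq_of_cprob_eq {W : Ω → ℝ} {A B S : Set Ω} (hB : MeasurableSet B)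
    (hW : Integrable W) (hS : cprob B (A ∩ S) = cprob B A)
    (hSc : cprob Bᶜ (A ∩ S) = cprob Bᶜ A) :
    cexp W (A ∩ S) = cprob B A * cexp W (A ∩ B ∩ S) + cprob Bᶜ A * cexp W (A ∩ Bᶜ ∩ S) := by
  rw [cexp_eq_cprob_mul_cexp_add hB hW.integrableOn, hS, hSc, Set.inter_right_comm,
    Set.inter_right_comm A S]

end TotalExpectation

theorem trend_relation_repeated_cross_section_general
    {Ω : Type*} [MeasureSpace Ω] [IsProbabilityMeasure (ℙ : Measure Ω)]
    (W : Ω → ℝ) (T D Dstar : Ω → ℝ)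
    (hW : Integrable W)
    (hDsmeas : Measurable Dstar)
    (hDsbin : ∀ ω, Dstar ω = 0 ∨ Dstar ω = 1)
    (hpos : ∀ d d' t : ℝ, (d = 0 ∨ d = 1) → (d' = 0 ∨ d' = 1) → (t = 0 ∨ t = 1) →
      0 < (ℙ : Measure Ω) ({ω | D ω = d} ∩ {ω | Dstar ω = d'} ∩ {ω | T ω = t}))
    -- (i) no compositional changes: P(D* = d' | D = d, T = t) = P(D* = d' | D = d)
    (hcomp : ∀ d d' t : ℝ, (d = 0 ∨ d = 1) → (d' = 0 ∨ d' = 1) → (t = 0 ∨ t = 1) →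
      cprob {ω | Dstar ω = d'} ({ω | D ω = d} ∩ {ω | T ω = t})
        = cprob {ω | Dstar ω = d'} {ω | D ω = d})
    -- (ii) non-differential misclassification in counterfactual trends
    (hnondiff : ∀ d d' : ℝ, (d = 0 ∨ d = 1) → (d' = 0 ∨ d' = 1) →
      cexp W ({ω | D ω = d} ∩ {ω | Dstar ω = d'} ∩ {ω | T ω = 1})
        - cexp W ({ω | D ω = d} ∩ {ω | Dstar ω = d'} ∩ {ω | T ω = 0})
      = cexp W ({ω | Dstar ω = d'} ∩ {ω | T ω = 1})
        - cexp W ({ω | Dstar ω = d'} ∩ {ω | T ω = 0})) :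
    (cexp W ({ω | D ω = 1} ∩ {ω | T ω = 1}) - cexp W ({ω | D ω = 1} ∩ {ω | T ω = 0}))
      - (cexp W ({ω | D ω = 0} ∩ {ω | T ω = 1}) - cexp W ({ω | D ω = 0} ∩ {ω | T ω = 0}))
    = (cprob {ω | Dstar ω = 1} {ω | D ω = 1} + cprob {ω | Dstar ω = 0} {ω | D ω = 0} - 1)
      * ((cexp W ({ω | Dstar ω = 1} ∩ {ω | T ω = 1})
            - cexp W ({ω | Dstar ω = 1} ∩ {ω | T ω = 0}))
        - (cexp W ({ω | Dstar ω = 0} ∩ {ω | T ω = 1})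
            - cexp W ({ω | Dstar ω = 0} ∩ {ω | T ω = 0}))) := by
  set B := {ω | Dstar ω = 1}
  have hB : MeasurableSet B := hDsmeas (measurableSet_singleton 1)
  have hBc : {ω | Dstar ω = 0} = Bᶜ := by
    ext ω
    rcases hDsbin ω with h | h <;> simp [B, h]
  rw [hBc]
  have trend : ∀ d : ℝ, (d = 0 ∨ d = 1) →
      cexp W ({ω | D ω = d} ∩ {ω | T ω = 1}) - cexp W ({ω | D ω = d} ∩ {ω | T ω = 0})
        = cprob B {ω | D ω = d} * (cexp W (B ∩ {ω | T ω = 1}) - cexp W (B ∩ {ω | T ω = 0}))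
          + cprob Bᶜ {ω | D ω = d}
            * (cexp W (Bᶜ ∩ {ω | T ω = 1}) - cexp W (Bᶜ ∩ {ω | T ω = 0})) := by
    intro d hd
    have hcomp₀₁ := hcomp d 0 1 hd (.inl rfl) (.inr rfl)
    have hcomp₀₀ := hcomp d 0 0 hd (.inl rfl) (.inl rfl)
    have hnondiff₀ := hnondiff d 0 hd (.inl rfl)
    rw [hBc] at hcomp₀₁ hcomp₀₀ hnondiff₀
    rw [cexp_inter_eq_of_cprob_eq hB hW (hcomp d 1 1 hd (.inr rfl) (.inr rfl)) hcomp₀₁,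
      cexp_inter_eq_of_cprob_eq hB hW (hcomp d 1 0 hd (.inr rfl) (.inl rfl)) hcomp₀₀,
      ← hnondiff d 1 hd (.inr rfl), ← hnondiff₀]
    ring
  have total : ∀ d : ℝ, (d = 0 ∨ d = 1) → cprob B {ω | D ω = d} + cprob Bᶜ {ω | D ω = d} = 1 :=
    fun d hd ↦ cprob_add_cprob_compl hB
      ((hpos d 1 1 hd (.inr rfl) (.inr rfl)).trans_le
        (measure_mono (Set.inter_subset_left.trans Set.inter_subset_left))).ne'
  rw [trend 1 (.inr rfl), trend 0 (.inl rfl), eq_sub_of_add_eq' (total 1 (.inr rfl)),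
    eq_sub_of_add_eq (total 0 (.inl rfl))]
  ring

/-- **Proposition 1, repeated cross-section case.**  Ruling out compositional changes (i) and
assuming non-differential misclassification in counterfactual trends (ii), the difference in
counterfactual trends formed with the misclassified `D` equals `(q₁ + q₀ − 1)` times the
difference formed with the true `D*`. -/
theorem trend_relation_repeated_cross_section
    {Ω : Type*} [MeasureSpace Ω] [IsProbabilityMeasure (ℙ : Measure Ω)]
    (W : Ω → ℝ) (T D Dstar : Ω → ℝ)
    (hW : Integrable W)
    (hTmeas : Measurable T) (hDmeas : Measurable D) (hDsmeas : Measurable Dstar)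
    (hTbin : ∀ ω, T ω = 0 ∨ T ω = 1)
    (hDbin : ∀ ω, D ω = 0 ∨ D ω = 1) (hDsbin : ∀ ω, Dstar ω = 0 ∨ Dstar ω = 1)
    (hpos : ∀ d d' t : ℝ, (d = 0 ∨ d = 1) → (d' = 0 ∨ d' = 1) → (t = 0 ∨ t = 1) →
      0 < (ℙ : Measure Ω) ({ω | D ω = d} ∩ {ω | Dstar ω = d'} ∩ {ω | T ω = t}))
    (hpos' : ∀ d' t : ℝ, (d' = 0 ∨ d' = 1) → (t = 0 ∨ t = 1) →
      0 < (ℙ : Measure Ω) ({ω | Dstar ω = d'} ∩ {ω | T ω = t}))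
    -- (i) no compositional changes: P(D* = d' | D = d, T = t) = P(D* = d' | D = d)
    (hcomp : ∀ d d' t : ℝ, (d = 0 ∨ d = 1) → (d' = 0 ∨ d' = 1) → (t = 0 ∨ t = 1) →
      cprob {ω | Dstar ω = d'} ({ω | D ω = d} ∩ {ω | T ω = t})
        = cprob {ω | Dstar ω = d'} {ω | D ω = d})
    -- (ii) non-differential misclassification in counterfactual trends
    (hnondiff : ∀ d d' : ℝ, (d = 0 ∨ d = 1) → (d' = 0 ∨ d' = 1) →
      cexp W ({ω | D ω = d} ∩ {ω | Dstar ω = d'} ∩ {ω | T ω = 1})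
        - cexp W ({ω | D ω = d} ∩ {ω | Dstar ω = d'} ∩ {ω | T ω = 0})
      = cexp W ({ω | Dstar ω = d'} ∩ {ω | T ω = 1})
        - cexp W ({ω | Dstar ω = d'} ∩ {ω | T ω = 0})) :
    (cexp W ({ω | D ω = 1} ∩ {ω | T ω = 1}) - cexp W ({ω | D ω = 1} ∩ {ω | T ω = 0}))
      - (cexp W ({ω | D ω = 0} ∩ {ω | T ω = 1}) - cexp W ({ω | D ω = 0} ∩ {ω | T ω = 0}))
    = (cprob {ω | Dstar ω = 1} {ω | D ω = 1} + cprob {ω | Dstar ω = 0} {ω | D ω = 0} - 1)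
      * ((cexp W ({ω | Dstar ω = 1} ∩ {ω | T ω = 1})
            - cexp W ({ω | Dstar ω = 1} ∩ {ω | T ω = 0}))
        - (cexp W ({ω | Dstar ω = 0} ∩ {ω | T ω = 1})
            - cexp W ({ω | Dstar ω = 0} ∩ {ω | T ω = 0}))) :=
  trend_relation_repeated_cross_section_general W T D Dstar hW hDsmeas hDsbin hpos hcomp hnondiff
end

section
/- Let (Ω, ℱ, P) be a probability space with integrable real random variables Y₀(0), Y₁(0), Y₁(1) and binary random variables D, D* : Ω → {0,1} with P(D=1) > 0 and P(D=0) > 0. Define the observed outcomes Y₀ := Y₀(0) and Y₁ := D*·Y₁(1) + (1−D*)·Y₁(0). Then DID(D) := E[Y₁−Y₀ | D=1] − E[Y₁−Y₀ | D=0] = (E[D*·(Y₁(1)−Y₁(0)) | D=1] − E[D*·(Y₁(1)−Y₁(0)) | D=0]) + DT(D), where DT(D) := E[Y₁(0)−Y₀(0) | D=1] − E[Y₁(0)−Y₀(0) | D=0]. Moreover, if D ≤ D* almost surely (one-sided misclassification), then E[D*·(Y₁(1)−Y₁(0)) | D=1] = E[Y₁(1)−Y₁(0) | D=1]. -/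
/-
The observed post-period outcome splits pointwise as `Y₁ − Y₀ = D*·(Y₁(1) − Y₁(0)) + (Y₁(0) − Y₀(0))`,
and conditional expectation given an event is additive, which gives the decomposition.
Under `D ≤ D*`, the factor `D*` equals `1` almost surely on `{D = 1}`, so it can be dropped there.
-/

open MeasureTheory ProbabilityTheory

section cexp

variable {Ω : Type*} [MeasureSpace Ω]

lemma cexp_add {g h : Ω → ℝ} (hg : Integrable g) (hh : Integrable h) (A : Set Ω) :
    cexp (fun ω => g ω + h ω) A = cexp g A + cexp h A := by
  rw [cexp, cexp, cexp, integral_add hg.integrableOn hh.integrableOn, add_div]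

lemma cexp_congr_ae {g h : Ω → ℝ} {A : Set Ω} (hgh : g =ᵐ[(ℙ : Measure Ω).restrict A] h) :
    cexp g A = cexp h A := by
  rw [cexp, cexp, integral_congr_ae hgh]

lemma cexp_mul_eq_of_ae_eq_one {B Z : Ω → ℝ} {A : Set Ω} (hA : MeasurableSet A)
    (hB : ∀ᵐ ω ∂(ℙ : Measure Ω), ω ∈ A → B ω = 1) :
    cexp (fun ω => B ω * Z ω) A = cexp Z A := by
  refine cexp_congr_ae ?_
  filter_upwards [(ae_restrict_iff' hA).2 hB] with ω hω
  rw [hω, one_mul]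

end cexp

lemma MeasureTheory.Integrable.binary_mul {Ω : Type*} [MeasurableSpace Ω] {μ : Measure Ω}
    {B Z : Ω → ℝ}
    (hB : AEStronglyMeasurable B μ) (hBbin : ∀ ω, B ω = 0 ∨ B ω = 1) (hZ : Integrable Z μ) :
    Integrable (fun ω => B ω * Z ω) μ :=
  hZ.bdd_mul (c := 1) hB <| ae_of_all _ fun ω => by rcases hBbin ω with h | h <;> simp [h]

theorem did_decomposition_under_misclassification_general
    {Ω : Type*} [MeasureSpace Ω]
    (Y00 Y10 Y11 : Ω → ℝ) (D Dstar : Ω → ℝ)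
    (hY00 : Integrable Y00) (hY10 : Integrable Y10) (hY11 : Integrable Y11)
    (hDmeas : Measurable D) (hDsmeas : Measurable Dstar)
    (hDsbin : ∀ ω, Dstar ω = 0 ∨ Dstar ω = 1) :
    (cexp (fun ω => (Dstar ω * Y11 ω + (1 - Dstar ω) * Y10 ω) - Y00 ω) {ω | D ω = 1}
        - cexp (fun ω => (Dstar ω * Y11 ω + (1 - Dstar ω) * Y10 ω) - Y00 ω) {ω | D ω = 0}
      = (cexp (fun ω => Dstar ω * (Y11 ω - Y10 ω)) {ω | D ω = 1}
          - cexp (fun ω => Dstar ω * (Y11 ω - Y10 ω)) {ω | D ω = 0})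
        + (cexp (fun ω => Y10 ω - Y00 ω) {ω | D ω = 1}
            - cexp (fun ω => Y10 ω - Y00 ω) {ω | D ω = 0}))
    ∧ ((∀ᵐ ω ∂(ℙ : Measure Ω), D ω ≤ Dstar ω) →
        cexp (fun ω => Dstar ω * (Y11 ω - Y10 ω)) {ω | D ω = 1}
          = cexp (fun ω => Y11 ω - Y10 ω) {ω | D ω = 1}) := by
  have hsplit : (fun ω => (Dstar ω * Y11 ω + (1 - Dstar ω) * Y10 ω) - Y00 ω)
      = fun ω => Dstar ω * (Y11 ω - Y10 ω) + (Y10 ω - Y00 ω) := by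
    funext ω; ring
  have hgap : Integrable (fun ω => Y11 ω - Y10 ω) := hY11.sub hY10
  have htrend : Integrable (fun ω => Y10 ω - Y00 ω) := hY10.sub hY00
  have hadd := cexp_add (hgap.binary_mul hDsmeas.aestronglyMeasurable hDsbin) htrend
  refine ⟨by rw [hsplit, hadd, hadd]; ring, fun hle => ?_⟩
  refine cexp_mul_eq_of_ae_eq_one (hDmeas (measurableSet_singleton 1)) ?_
  filter_upwards [hle] with ω hω hD
  rcases hDsbin ω with h | h
  · linarith [show D ω = 1 from hD]
  · exact h

/-- **Decomposition of the DID estimand under misclassification (equation (6) of the paper).**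
With observed outcomes `Y₀ = Y₀(0)` and `Y₁ = D*·Y₁(1) + (1 − D*)·Y₁(0)`,
`DID(D) = (E[D*(Y₁(1)−Y₁(0)) | D=1] − E[D*(Y₁(1)−Y₁(0)) | D=0]) + DT(D)`; moreover under
one-sided misclassification `D ≤ D*` a.s., the first conditional expectation equals
`E[Y₁(1)−Y₁(0) | D=1]`. -/
theorem did_decomposition_under_misclassification
    {Ω : Type*} [MeasureSpace Ω] [IsProbabilityMeasure (ℙ : Measure Ω)]
    (Y00 Y10 Y11 : Ω → ℝ) (D Dstar : Ω → ℝ)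
    (hY00 : Integrable Y00) (hY10 : Integrable Y10) (hY11 : Integrable Y11)
    (hDmeas : Measurable D) (hDsmeas : Measurable Dstar)
    (hDbin : ∀ ω, D ω = 0 ∨ D ω = 1) (hDsbin : ∀ ω, Dstar ω = 0 ∨ Dstar ω = 1)
    (hD1 : 0 < (ℙ : Measure Ω) {ω | D ω = 1})
    (hD0 : 0 < (ℙ : Measure Ω) {ω | D ω = 0}) :
    (cexp (fun ω => (Dstar ω * Y11 ω + (1 - Dstar ω) * Y10 ω) - Y00 ω) {ω | D ω = 1}
        - cexp (fun ω => (Dstar ω * Y11 ω + (1 - Dstar ω) * Y10 ω) - Y00 ω) {ω | D ω = 0}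
      = (cexp (fun ω => Dstar ω * (Y11 ω - Y10 ω)) {ω | D ω = 1}
          - cexp (fun ω => Dstar ω * (Y11 ω - Y10 ω)) {ω | D ω = 0})
        + (cexp (fun ω => Y10 ω - Y00 ω) {ω | D ω = 1}
            - cexp (fun ω => Y10 ω - Y00 ω) {ω | D ω = 0}))
    ∧ ((∀ᵐ ω ∂(ℙ : Measure Ω), D ω ≤ Dstar ω) →
        cexp (fun ω => Dstar ω * (Y11 ω - Y10 ω)) {ω | D ω = 1}
          = cexp (fun ω => Y11 ω - Y10 ω) {ω | D ω = 1}) :=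
  did_decomposition_under_misclassification_general Y00 Y10 Y11 D Dstar hY00 hY10 hY11 hDmeas
    hDsmeas hDsbin
end

section
/- Let ((ΔYᵢ, Dᵢ, D*ᵢ, Δξᵢ))_{i∈ℕ} be an i.i.d. sequence of copies of (ΔY, D, D*, Δξ), where ΔY is square-integrable, D, D* take values in {0,1} with 0 < P(D=1) < 1, Δξ is integrable, and ΔY = θ + τ·D* + Δξ almost surely for constants θ, τ ∈ ℝ. For each N, let D̄_N := (1/N)∑_{i<N} Dᵢ, ΔȲ_N := (1/N)∑_{i<N} ΔYᵢ, and define the OLS slope τ̂_N := [∑_{i<N}(Dᵢ−D̄_N)(ΔYᵢ−ΔȲ_N)] / [∑_{i<N}(Dᵢ−D̄_N)²] (whenever the denominator is nonzero). Then τ̂_N converges almost surely to τ·(P(D*=1 | D=1) − P(D*=1 | D=0)) + (E[Δξ | D=1] − E[Δξ | D=0]). -/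
/-! By the strong law of large numbers the sample moments of `D`, `ΔY`, `D·ΔY` and `D²` converge
almost surely, so the OLS slope converges to `Cov(D, ΔY) / Var(D)`. For a binary regressor
`D = 1_S` this ratio is the difference of group means `E[ΔY | S] - E[ΔY | Sᶜ]`; substituting
`ΔY = θ + τ·D* + Δξ` into each group mean gives the limit, the intercept `θ` cancelling. -/

open MeasureTheory ProbabilityTheory Filter

open Finset Topology

noncomputable def olsSlope (N : ℕ) (x y : ℕ → ℝ) : ℝ :=
  (∑ i : Fin N, (x i - (∑ j : Fin N, x j) / N) * (y i - (∑ j : Fin N, y j) / N)) /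
    ∑ i : Fin N, (x i - (∑ j : Fin N, x j) / N) ^ 2

lemma olsSlope_eq_moments (N : ℕ) (x y : ℕ → ℝ) :
    olsSlope N x y =
      ((∑ i ∈ range N, x i * y i) / N - (∑ i ∈ range N, x i) / N * ((∑ i ∈ range N, y i) / N)) /
        ((∑ i ∈ range N, x i ^ 2) / N - ((∑ i ∈ range N, x i) / N) ^ 2) := by
  rcases N.eq_zero_or_pos with rfl | hN
  · simp [olsSlope]
  have hN : (N : ℝ) ≠ 0 := by positivity
  simp only [olsSlope, Fin.sum_univ_eq_sum_range x, Fin.sum_univ_eq_sum_range y,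
    Fin.sum_univ_eq_sum_range fun i => (x i - (∑ j ∈ range N, x j) / N) ^ 2,
    Fin.sum_univ_eq_sum_range fun i =>
      (x i - (∑ j ∈ range N, x j) / N) * (y i - (∑ j ∈ range N, y j) / N)]
  simp only [sub_sq, sub_mul, mul_sub, sum_sub_distrib, sum_add_distrib, ← mul_sum, ← sum_mul,
    sum_const, card_range, nsmul_eq_mul]
  rw [← div_div_div_cancel_right₀ hN]
  congr 1 <;> field_simp <;> ring

section IID

variable {Ω E : Type*} [MeasurableSpace Ω] [MeasurableSpace E] {μ : Measure Ω} {V : ℕ → Ω → E}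

lemma ae_tendsto_sampleMean_comp (hindep : Pairwise fun i j => IndepFun (V i) (V j) μ)
    (hident : ∀ i, IdentDistrib (V i) (V 0) μ μ) {g : E → ℝ} (hg : Measurable g)
    (hint : Integrable (g ∘ V 0) μ) :
    ∀ᵐ ω ∂μ, Tendsto (fun N : ℕ => (∑ i ∈ range N, g (V i ω)) / N) atTop (𝓝 μ[g ∘ V 0]) :=
  strong_law_ae_real (fun i => g ∘ V i) hint (fun _ _ hij => (hindep hij).comp hg hg)
    (fun i => (hident i).comp hg)

theorem ae_tendsto_olsSlope [IsProbabilityMeasure μ]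
    (hindep : Pairwise fun i j => IndepFun (V i) (V j) μ)
    (hident : ∀ i, IdentDistrib (V i) (V 0) μ μ) {x y : E → ℝ} (hx : Measurable x)
    (hy : Measurable y) (hx2 : MemLp (x ∘ V 0) 2 μ) (hy2 : MemLp (y ∘ V 0) 2 μ)
    (hvar : Var[x ∘ V 0; μ] ≠ 0) :
    ∀ᵐ ω ∂μ, Tendsto (fun N => olsSlope N (fun i => x (V i ω)) (fun i => y (V i ω))) atTop
      (𝓝 (cov[x ∘ V 0, y ∘ V 0; μ] / Var[x ∘ V 0; μ])) := by
  have hX := ae_tendsto_sampleMean_comp hindep hident hx (hx2.integrable one_le_two)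
  have hY := ae_tendsto_sampleMean_comp hindep hident hy (hy2.integrable one_le_two)
  have hXY := ae_tendsto_sampleMean_comp hindep hident (hx.mul hy) (hx2.integrable_mul hy2)
  have hXX := ae_tendsto_sampleMean_comp hindep hident (hx.pow_const 2) hx2.integrable_sq
  rw [variance_eq_sub hx2] at hvar ⊢
  rw [covariance_eq_sub hx2 hy2]
  filter_upwards [hX, hY, hXY, hXX] with ω hX hY hXY hXX
  simp_rw [olsSlope_eq_moments]
  exact (hXY.sub (hX.mul hY)).div (hXX.sub (hX.pow 2)) hvar

end IID

section Indicator

variable {Ω : Type*} [MeasurableSpace Ω] {μ : Measure Ω} [IsProbabilityMeasure μ] {S : Set Ω}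

lemma memLp_indicator_one (hS : MeasurableSet S) : MemLp (S.indicator 1 : Ω → ℝ) 2 μ :=
  memLp_indicator_const 2 hS 1 (Or.inr (measure_ne_top μ S))

lemma variance_indicator_one (hS : MeasurableSet S) :
    Var[S.indicator 1; μ] = μ.real S * μ.real Sᶜ := by
  have hsq : (S.indicator 1 : Ω → ℝ) ^ 2 = S.indicator 1 := by
    rw [sq, ← Set.inter_indicator_one, Set.inter_self]
  rw [variance_eq_sub (memLp_indicator_one hS), hsq, integral_indicator_one hS,
    probReal_compl_eq_one_sub hS]
  ring

lemma covariance_indicator_one_left (hS : MeasurableSet S) {Y : Ω → ℝ} (hY : MemLp Y 2 μ) :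
    cov[S.indicator 1, Y; μ] = μ.real Sᶜ * ∫ ω in S, Y ω ∂μ - μ.real S * ∫ ω in Sᶜ, Y ω ∂μ := by
  have hmul : S.indicator 1 * Y = S.indicator Y := by
    ext ω
    by_cases hω : ω ∈ S <;> simp [hω]
  rw [covariance_eq_sub (memLp_indicator_one hS) hY, hmul, integral_indicator hS,
    integral_indicator_one hS, ← integral_add_compl hS (hY.integrable one_le_two),
    probReal_compl_eq_one_sub hS]
  ring

end Indicator

section Binary

variable {α M : Type*} [Zero M] [One M] [NeZero (1 : M)] {f : α → M}

lemma eq_indicator_one_of_binary (hf : ∀ a, f a = 0 ∨ f a = 1) :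
    f = {a | f a = 1}.indicator 1 := by
  ext a
  rcases hf a with h | h <;> simp [h]

lemma setOf_eq_zero_of_binary (hf : ∀ a, f a = 0 ∨ f a = 1) :
    {a | f a = 0} = {a | f a = 1}ᶜ := by
  ext a
  rcases hf a with h | h <;> simp [h]

end Binary

section Conditional

variable {Ω : Type*} [MeasureSpace Ω] {S : Set Ω}

lemma cexp_of_ae_eq [IsFiniteMeasure (ℙ : Measure Ω)] {Y ξ : Ω → ℝ} {T : Set Ω} {θ τ : ℝ}
    (hS : ℙ S ≠ 0) (hT : MeasurableSet T) (hξ : Integrable ξ)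
    (hY : Y =ᵐ[ℙ] fun ω => θ + τ * T.indicator 1 ω + ξ ω) :
    cexp Y S = θ + τ * cprob T S + cexp ξ S := by
  have hp : (ℙ : Measure Ω).real S ≠ 0 := (measureReal_ne_zero_iff (measure_ne_top _ _)).2 hS
  have hint : ∫ ω in S, Y ω = θ * (ℙ : Measure Ω).real S + τ * (ℙ : Measure Ω).real (T ∩ S)
      + ∫ ω in S, ξ ω := by
    have hind : Integrable (fun ω => τ * T.indicator 1 ω) ((ℙ : Measure Ω).restrict S) :=
      ((integrable_const (1 : ℝ)).indicator hT).const_mul τ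
    rw [integral_congr_ae (ae_restrict_of_ae hY),
      integral_add (f := fun ω => θ + τ * T.indicator 1 ω) ((integrable_const θ).add hind)
        hξ.restrict, integral_add (integrable_const θ) hind, integral_const, integral_const_mul,
      integral_indicator_one hT, measureReal_restrict_apply hT, measureReal_restrict_apply_univ,
      smul_eq_mul, mul_comm]
  simp only [cexp, cprob, ← measureReal_def, hint]
  field_simp

lemma covariance_indicator_div_variance [IsProbabilityMeasure (ℙ : Measure Ω)]
    (hS : MeasurableSet S) (hS₀ : ℙ S ≠ 0) (hSc : ℙ Sᶜ ≠ 0) {Y : Ω → ℝ} (hY : MemLp Y 2) :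
    cov[S.indicator 1, Y] / Var[S.indicator 1] = cexp Y S - cexp Y Sᶜ := by
  have hp : (ℙ : Measure Ω).real S ≠ 0 :=
    (measureReal_ne_zero_iff (measure_ne_top _ _)).2 hS₀
  have hq : (ℙ : Measure Ω).real Sᶜ ≠ 0 := (measureReal_ne_zero_iff (measure_ne_top _ _)).2 hSc
  rw [covariance_indicator_one_left hS hY, variance_indicator_one hS]
  simp only [cexp, ← measureReal_def]
  field_simp

end Conditional

/-- **Inconsistency of the simple DID OLS estimator under misclassification (Section 4).**
For i.i.d. data `(ΔYᵢ, Dᵢ, D*ᵢ, Δξᵢ)` with `ΔY = θ + τ·D* + Δξ` a.s., the OLS slope from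
regressing `ΔY` on a constant and the misclassified `D` converges almost surely to
`τ·(P(D*=1|D=1) − P(D*=1|D=0)) + (E[Δξ|D=1] − E[Δξ|D=0])`. -/
theorem simple_did_ols_limit_under_misclassification
    {Ω : Type*} [MeasureSpace Ω] [IsProbabilityMeasure (ℙ : Measure Ω)]
    (V : ℕ → Ω → ℝ × ℝ × ℝ × ℝ) (θ τ : ℝ)
    (hmeas : ∀ i, Measurable (V i))
    (hindep : iIndepFun V (ℙ : Measure Ω))
    (hident : ∀ i, IdentDistrib (V i) (V 0) (ℙ : Measure Ω) (ℙ : Measure Ω))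
    (hsq : MemLp (fun ω => (V 0 ω).1) 2 (ℙ : Measure Ω))
    (hξint : Integrable (fun ω => (V 0 ω).2.2.2))
    (hDbin : ∀ i ω, (V i ω).2.1 = 0 ∨ (V i ω).2.1 = 1)
    (hDsbin : ∀ i ω, (V i ω).2.2.1 = 0 ∨ (V i ω).2.2.1 = 1)
    (hD1pos : 0 < (ℙ : Measure Ω) {ω | (V 0 ω).2.1 = 1})
    (hD1lt : (ℙ : Measure Ω) {ω | (V 0 ω).2.1 = 1} < 1)
    (hmodel : ∀ i, ∀ᵐ ω ∂(ℙ : Measure Ω),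
      (V i ω).1 = θ + τ * (V i ω).2.2.1 + (V i ω).2.2.2) :
    ∀ᵐ ω ∂(ℙ : Measure Ω), Tendsto
      (fun N : ℕ =>
        (∑ i : Fin N, ((V i ω).2.1 - (∑ j : Fin N, (V j ω).2.1) / (N : ℝ))
            * ((V i ω).1 - (∑ j : Fin N, (V j ω).1) / (N : ℝ)))
        / (∑ i : Fin N, ((V i ω).2.1 - (∑ j : Fin N, (V j ω).2.1) / (N : ℝ)) ^ 2))
      atTop
      (nhds (τ * (cprob {ω' | (V 0 ω').2.2.1 = 1} {ω' | (V 0 ω').2.1 = 1}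
              - cprob {ω' | (V 0 ω').2.2.1 = 1} {ω' | (V 0 ω').2.1 = 0})
          + (cexp (fun ω' => (V 0 ω').2.2.2) {ω' | (V 0 ω').2.1 = 1}
              - cexp (fun ω' => (V 0 ω').2.2.2) {ω' | (V 0 ω').2.1 = 0}))) := by
  set S : Set Ω := {ω | (V 0 ω).2.1 = 1}
  set T : Set Ω := {ω | (V 0 ω).2.2.1 = 1}
  have hS : MeasurableSet S := (hmeas 0).snd.fst (measurableSet_singleton 1)
  have hT : MeasurableSet T := (hmeas 0).snd.snd.fst (measurableSet_singleton 1)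
  have hSc : ℙ Sᶜ ≠ 0 := by
    rw [prob_compl_eq_one_sub hS]
    exact (tsub_pos_of_lt hD1lt).ne'
  have hD : (fun v : ℝ × ℝ × ℝ × ℝ => v.2.1) ∘ V 0 = S.indicator 1 :=
    eq_indicator_one_of_binary (hDbin 0)
  have hY : (fun ω => (V 0 ω).1) =ᵐ[ℙ] fun ω => θ + τ * T.indicator 1 ω + (V 0 ω).2.2.2 := by
    filter_upwards [hmodel 0] with ω hω
    rw [hω, ← congrFun (eq_indicator_one_of_binary (hDsbin 0)) ω]
  have hvar : Var[S.indicator 1] ≠ 0 := by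
    rw [variance_indicator_one hS]
    exact mul_ne_zero ((measureReal_ne_zero_iff (measure_ne_top _ _)).2 hD1pos.ne')
      ((measureReal_ne_zero_iff (measure_ne_top _ _)).2 hSc)
  have hlimit : τ * (cprob T S - cprob T {ω | (V 0 ω).2.1 = 0})
      + (cexp (fun ω => (V 0 ω).2.2.2) S - cexp (fun ω => (V 0 ω).2.2.2) {ω | (V 0 ω).2.1 = 0})
      = cov[S.indicator 1, fun ω => (V 0 ω).1] / Var[S.indicator 1] := by
    rw [covariance_indicator_div_variance hS hD1pos.ne' hSc hsq, setOf_eq_zero_of_binary (hDbin 0),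
      cexp_of_ae_eq hD1pos.ne' hT hξint hY, cexp_of_ae_eq hSc hT hξint hY]
    ring
  have hlim := ae_tendsto_olsSlope (μ := ℙ) (fun i j hij => hindep.indepFun hij) hident
    measurable_snd.fst measurable_fst (hD ▸ memLp_indicator_one hS) hsq (hD ▸ hvar)
  rw [hD] at hlim
  rwa [hlimit]
end

section
/- Let (Ω, ℱ, P) be a probability space, X : Ω → ℝ^k a random vector, D* : Ω → {0,1} binary with P(D*=1) > 0, and Y₀(0), Y₁(0), Y₁(1) integrable real random variables. Define Y₀ := Y₀(0), Y₁ := D*·Y₁(1) + (1−D*)·Y₁(0), G₁(0) := Y₁(0) − Y₀(0), and X̊ := X − E[X | D*=1]. Suppose: (i) conditional parallel trends, E[G₁(0) | σ(X, D*)] = E[G₁(0) | σ(X)] a.s.; (ii) E[G₁(0) | σ(X)] = δ₀₁ + ⟪X̊, δ₁₁⟫ a.s. for constants δ₀₁ ∈ ℝ, δ₁₁ ∈ ℝ^k; and (iii) D*·E[Y₁(1)−Y₁(0) | σ(X, D*)] = D*·(τ + ⟪X̊, κ⟫) a.s. for constants τ ∈ ℝ, κ ∈ ℝ^k. Then almost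 surely E[Y₁−Y₀ | σ(X, D*)] = δ₀₁ + ⟪X̊, δ₁₁⟫ + D*·(τ + ⟪X̊, κ⟫); in particular, the error Δξ := (Y₁−Y₀) − δ₀₁ − ⟪X̊, δ₁₁⟫ − D*·(τ + ⟪X̊, κ⟫) satisfies E[Δξ | σ(X, D*)] = 0 almost surely and E[Δξ] = 0. -/
/-!
Write the observed change as `ΔY = G₁(0) + D*·(Y₁(1) − Y₁(0))`. Linearity of conditional
expectation and pulling out the `σ(X, D*)`-measurable factor `D*` give
`E[ΔY | σ(X, D*)] = E[G₁(0) | σ(X, D*)] + D*·E[Y₁(1) − Y₁(0) | σ(X, D*)]`, and (i)–(iii) identify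
the two terms. A variable minus a version of its own conditional expectation has conditional,
hence unconditional, mean zero.
-/

open MeasureTheory ProbabilityTheory
open scoped Matrix

namespace MeasureTheory

variable {Ω : Type*} {m m₀ : MeasurableSpace Ω} {μ : Measure Ω} {f h : Ω → ℝ}

theorem condExp_sub_ae_eq_zero_of_condExp_ae_eq (hm : m ≤ m₀) [SigmaFinite (μ.trim hm)]
    (hf : Integrable f μ) (hfh : μ[f | m] =ᵐ[μ] h) :
    μ[f - h | m] =ᵐ[μ] 0 := by
  have hh : Integrable h μ := integrable_condExp.congr hfh
  have hh_self : μ[h | m] =ᵐ[μ] h :=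
    condExp_of_aestronglyMeasurable' hm
      (stronglyMeasurable_condExp.aestronglyMeasurable.congr hfh) hh
  filter_upwards [condExp_sub hf hh m, hfh, hh_self] with ω hsub hf' hh'
  simp [hsub, hf', hh']

theorem integral_eq_zero_of_condExp_ae_eq_zero (hm : m ≤ m₀) [SigmaFinite (μ.trim hm)]
    (hf : μ[f | m] =ᵐ[μ] 0) : ∫ ω, f ω ∂μ = 0 := by
  rw [← integral_condExp hm, integral_congr_ae hf, Pi.zero_def, integral_zero]

end MeasureTheory

theorem fd_regression_equation_derivation_general
    {Ω : Type*} [MeasureSpace Ω] [IsProbabilityMeasure (ℙ : Measure Ω)]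
    {k : ℕ} (X : Ω → (Fin k → ℝ)) (Dstar : Ω → ℝ) (Y00 Y10 Y11 : Ω → ℝ)
    (hX : Measurable X) (hDs : Measurable Dstar) (hDsbin : ∀ ω, Dstar ω = 0 ∨ Dstar ω = 1)
    (hY00 : Integrable Y00) (hY10 : Integrable Y10) (hY11 : Integrable Y11)
    -- X̊ = X − E[X | D* = 1]
    (Xc : Ω → (Fin k → ℝ))
    (δ01 : ℝ) (δ11 : Fin k → ℝ) (τ : ℝ) (κ : Fin k → ℝ)
    -- (i) conditional parallel trends
    (hcpt : (ℙ : Measure Ω)[(fun ω => Y10 ω - Y00 ω) |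
          MeasurableSpace.comap (fun ω => (X ω, Dstar ω)) inferInstance]
        =ᵐ[(ℙ : Measure Ω)]
      (ℙ : Measure Ω)[(fun ω => Y10 ω - Y00 ω) | MeasurableSpace.comap X inferInstance])
    -- (ii) linear covariate-specific trend
    (hlin : (ℙ : Measure Ω)[(fun ω => Y10 ω - Y00 ω) | MeasurableSpace.comap X inferInstance]
        =ᵐ[(ℙ : Measure Ω)] fun ω => δ01 + Xc ω ⬝ᵥ δ11)
    -- (iii) linear heterogeneous treatment effect on the treated
    (hte : (fun ω => Dstar ω * ((ℙ : Measure Ω)[(fun ω' => Y11 ω' - Y10 ω') |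
          MeasurableSpace.comap (fun ω' => (X ω', Dstar ω')) inferInstance]) ω)
        =ᵐ[(ℙ : Measure Ω)] fun ω => Dstar ω * (τ + Xc ω ⬝ᵥ κ)) :
    ((ℙ : Measure Ω)[(fun ω => (Dstar ω * Y11 ω + (1 - Dstar ω) * Y10 ω) - Y00 ω) |
          MeasurableSpace.comap (fun ω => (X ω, Dstar ω)) inferInstance]
        =ᵐ[(ℙ : Measure Ω)]
      fun ω => δ01 + Xc ω ⬝ᵥ δ11 + Dstar ω * (τ + Xc ω ⬝ᵥ κ))
    ∧ ((ℙ : Measure Ω)[(fun ω => ((Dstar ω * Y11 ω + (1 - Dstar ω) * Y10 ω) - Y00 ω)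
          - (δ01 + Xc ω ⬝ᵥ δ11 + Dstar ω * (τ + Xc ω ⬝ᵥ κ))) |
          MeasurableSpace.comap (fun ω => (X ω, Dstar ω)) inferInstance]
        =ᵐ[(ℙ : Measure Ω)] fun _ => (0 : ℝ))
    ∧ (∫ ω, (((Dstar ω * Y11 ω + (1 - Dstar ω) * Y10 ω) - Y00 ω)
          - (δ01 + Xc ω ⬝ᵥ δ11 + Dstar ω * (τ + Xc ω ⬝ᵥ κ)))) = 0 := by
  set m : MeasurableSpace Ω := MeasurableSpace.comap (fun ω => (X ω, Dstar ω)) inferInstance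
  have hm : m ≤ MeasureSpace.toMeasurableSpace := (hX.prodMk hDs).comap_le
  have hDm : StronglyMeasurable[m] Dstar :=
    (measurable_snd.comp (comap_measurable (fun ω => (X ω, Dstar ω)))).stronglyMeasurable
  have hG : Integrable (fun ω => Y10 ω - Y00 ω) := hY10.sub hY00
  have hT : Integrable (fun ω => Y11 ω - Y10 ω) := hY11.sub hY10
  have hDT : Integrable (Dstar * fun ω => Y11 ω - Y10 ω) :=
    hT.bdd_mul (c := 1) hDs.aestronglyMeasurable
      (ae_of_all _ fun ω => by rcases hDsbin ω with h | h <;> simp [h])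
  have hΔ : (fun ω => (Dstar ω * Y11 ω + (1 - Dstar ω) * Y10 ω) - Y00 ω)
      = (fun ω => Y10 ω - Y00 ω) + Dstar * fun ω => Y11 ω - Y10 ω := by
    funext ω; simp only [Pi.add_apply, Pi.mul_apply]; ring
  have hΔint : Integrable (fun ω => (Dstar ω * Y11 ω + (1 - Dstar ω) * Y10 ω) - Y00 ω) := by
    rw [hΔ]; exact hG.add hDT
  have key : ℙ[(fun ω => (Dstar ω * Y11 ω + (1 - Dstar ω) * Y10 ω) - Y00 ω) | m]
      =ᵐ[ℙ] fun ω => δ01 + Xc ω ⬝ᵥ δ11 + Dstar ω * (τ + Xc ω ⬝ᵥ κ) := by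
    rw [hΔ]
    filter_upwards [condExp_add hG hDT m,
      condExp_mul_of_stronglyMeasurable_left hDm hDT hT, hcpt.trans hlin, hte]
      with ω hadd hmul htrend heffect
    rw [hadd, Pi.add_apply, hmul, htrend, ← heffect, Pi.mul_apply]
  have hξ := condExp_sub_ae_eq_zero_of_condExp_ae_eq hm hΔint key
  exact ⟨key, hξ, integral_eq_zero_of_condExp_ae_eq_zero hm hξ⟩

/-- **Derivation of the first-differenced regression equation (equation (19) of the paper).**
Under conditional parallel trends and the linear specifications of the covariate-specific trend
and the heterogeneous treatment effect, the observed outcome change has conditional mean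
`δ₀₁ + ⟪X̊, δ₁₁⟫ + D*·(τ + ⟪X̊, κ⟫)` given `σ(X, D*)`, so the implied error `Δξ` satisfies
`E[Δξ | σ(X, D*)] = 0` a.s. and `E[Δξ] = 0`. -/
theorem fd_regression_equation_derivation
    {Ω : Type*} [MeasureSpace Ω] [IsProbabilityMeasure (ℙ : Measure Ω)]
    {k : ℕ} (X : Ω → (Fin k → ℝ)) (Dstar : Ω → ℝ) (Y00 Y10 Y11 : Ω → ℝ)
    (hX : Measurable X) (hXint : Integrable X)
    (hDs : Measurable Dstar) (hDsbin : ∀ ω, Dstar ω = 0 ∨ Dstar ω = 1)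
    (hDs1 : 0 < (ℙ : Measure Ω) {ω | Dstar ω = 1})
    (hY00 : Integrable Y00) (hY10 : Integrable Y10) (hY11 : Integrable Y11)
    -- X̊ = X − E[X | D* = 1]
    (Xc : Ω → (Fin k → ℝ))
    (hXc : ∀ ω j, Xc ω j = X ω j
      - (∫ ω', Dstar ω' * X ω' j) / ((ℙ : Measure Ω) {ω' | Dstar ω' = 1}).toReal)
    (δ01 : ℝ) (δ11 : Fin k → ℝ) (τ : ℝ) (κ : Fin k → ℝ)
    -- (i) conditional parallel trends
    (hcpt : (ℙ : Measure Ω)[(fun ω => Y10 ω - Y00 ω) |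
          MeasurableSpace.comap (fun ω => (X ω, Dstar ω)) inferInstance]
        =ᵐ[(ℙ : Measure Ω)]
      (ℙ : Measure Ω)[(fun ω => Y10 ω - Y00 ω) | MeasurableSpace.comap X inferInstance])
    -- (ii) linear covariate-specific trend
    (hlin : (ℙ : Measure Ω)[(fun ω => Y10 ω - Y00 ω) | MeasurableSpace.comap X inferInstance]
        =ᵐ[(ℙ : Measure Ω)] fun ω => δ01 + Xc ω ⬝ᵥ δ11)
    -- (iii) linear heterogeneous treatment effect on the treated
    (hte : (fun ω => Dstar ω * ((ℙ : Measure Ω)[(fun ω' => Y11 ω' - Y10 ω') |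
          MeasurableSpace.comap (fun ω' => (X ω', Dstar ω')) inferInstance]) ω)
        =ᵐ[(ℙ : Measure Ω)] fun ω => Dstar ω * (τ + Xc ω ⬝ᵥ κ)) :
    ((ℙ : Measure Ω)[(fun ω => (Dstar ω * Y11 ω + (1 - Dstar ω) * Y10 ω) - Y00 ω) |
          MeasurableSpace.comap (fun ω => (X ω, Dstar ω)) inferInstance]
        =ᵐ[(ℙ : Measure Ω)]
      fun ω => δ01 + Xc ω ⬝ᵥ δ11 + Dstar ω * (τ + Xc ω ⬝ᵥ κ))
    ∧ ((ℙ : Measure Ω)[(fun ω => ((Dstar ω * Y11 ω + (1 - Dstar ω) * Y10 ω) - Y00 ω)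
          - (δ01 + Xc ω ⬝ᵥ δ11 + Dstar ω * (τ + Xc ω ⬝ᵥ κ))) |
          MeasurableSpace.comap (fun ω => (X ω, Dstar ω)) inferInstance]
        =ᵐ[(ℙ : Measure Ω)] fun _ => (0 : ℝ))
    ∧ (∫ ω, (((Dstar ω * Y11 ω + (1 - Dstar ω) * Y10 ω) - Y00 ω)
          - (δ01 + Xc ω ⬝ᵥ δ11 + Dstar ω * (τ + Xc ω ⬝ᵥ κ)))) = 0 :=
  fd_regression_equation_derivation_general X Dstar Y00 Y10 Y11 hX hDs hDsbin hY00 hY10 hY11 Xc δ01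
    δ11 τ κ hcpt hlin hte
end
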